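/- In the exact-penalty setting: if every ε ∈ [0,1]² admits a feasible (u_ε, t_ε) whose cost satisfies J(u_ε, t_ε) ≤ J(u₀, t₀) + L‖ε‖₁ for the feasible point (u₀, t₀) at ε = (0,0) (Lipschitz-type perturbation bound with constant L ≥ 0), and if min(c₁, c₂) > L, then every global minimizer of J_H = J + c₁ε_I + c₂ε_G has ε* = (0,0). -/

import Mathlib

open Set

/-! Comparing the minimizer with the feasible point at `ε = 0` bounds its penalty
`c₁ ε₁ + c₂ ε₂` by `L (ε₁ + ε₂)`; since each weight exceeds `L`, this forces `ε = 0`. -/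

theorem eq_zero_of_weighted_sum_le {c₁ c₂ L x y : ℝ} (hc₁ : L < c₁) (hc₂ : L < c₂)
    (hx : 0 ≤ x) (hy : 0 ≤ y) (h : c₁ * x + c₂ * y ≤ L * (x + y)) : x = 0 ∧ y = 0 := by
  have hx' : (c₁ - L) * x = 0 := by nlinarith [mul_nonneg (sub_nonneg.2 hc₂.le) hy]
  have hy' : (c₂ - L) * y = 0 := by nlinarith [mul_nonneg (sub_nonneg.2 hc₁.le) hx]
  exact ⟨(mul_eq_zero.1 hx').resolve_left (sub_ne_zero.2 hc₁.ne'),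
    (mul_eq_zero.1 hy').resolve_left (sub_ne_zero.2 hc₂.ne')⟩

theorem stmt14_general {α : Type*} (Feas : α → ℝ × ℝ → Prop) (J : α → ℝ)
    (c1 c2 L : ℝ) (hc : L < min c1 c2)
    (a0 : α) (h0 : Feas a0 (0, 0))
    (hLip : ∀ ε ∈ Icc (0:ℝ) 1 ×ˢ Icc (0:ℝ) 1, ∀ a, Feas a ε →
      J a0 ≤ J a + L * (|ε.1| + |ε.2|))
    (a' : α) (ε' : ℝ × ℝ)
    (hfeas : Feas a' ε') (hbox : ε' ∈ Icc (0:ℝ) 1 ×ˢ Icc (0:ℝ) 1)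
    (hopt : ∀ a ε, Feas a ε → ε ∈ Icc (0:ℝ) 1 ×ˢ Icc (0:ℝ) 1 →
      J a' + (c1 * ε'.1 + c2 * ε'.2) ≤ J a + (c1 * ε.1 + c2 * ε.2)) :
    ε' = (0, 0) := by
  have h₁ : 0 ≤ ε'.1 := hbox.1.1
  have h₂ : 0 ≤ ε'.2 := hbox.2.1
  have hzero : ((0, 0) : ℝ × ℝ) ∈ Icc (0:ℝ) 1 ×ˢ Icc (0:ℝ) 1 := by simp
  have hcost := hLip ε' hbox a' hfeas
  rw [abs_of_nonneg h₁, abs_of_nonneg h₂] at hcost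
  have hpenalty : c1 * ε'.1 + c2 * ε'.2 ≤ L * (ε'.1 + ε'.2) := by
    have := hopt a0 (0, 0) h0 hzero
    simp only [mul_zero, add_zero] at this
    linarith
  obtain ⟨e₁, e₂⟩ := eq_zero_of_weighted_sum_le (hc.trans_le (min_le_left _ _))
    (hc.trans_le (min_le_right _ _)) h₁ h₂ hpenalty
  exact Prod.ext e₁ e₂

/-- Exact-penalty property: if the feasible value function is Lipschitz in the
homotopy parameter with constant `L` (with respect to the 1-norm), and the
penalty weights both exceed `L`, then every global minimizer of the penalized
problem has homotopy parameter `ε* = (0, 0)`. -/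
theorem stmt14 {α : Type*} (Feas : α → ℝ × ℝ → Prop) (J : α → ℝ)
    (c1 c2 L : ℝ) (hL : 0 ≤ L) (hc : L < min c1 c2)
    (a0 : α) (h0 : Feas a0 (0, 0))
    (hLip : ∀ ε ∈ Icc (0:ℝ) 1 ×ˢ Icc (0:ℝ) 1, ∀ a, Feas a ε →
      J a0 ≤ J a + L * (|ε.1| + |ε.2|))
    (a' : α) (ε' : ℝ × ℝ)
    (hfeas : Feas a' ε') (hbox : ε' ∈ Icc (0:ℝ) 1 ×ˢ Icc (0:ℝ) 1)
    (hopt : ∀ a ε, Feas a ε → ε ∈ Icc (0:ℝ) 1 ×ˢ Icc (0:ℝ) 1 →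
      J a' + (c1 * ε'.1 + c2 * ε'.2) ≤ J a + (c1 * ε.1 + c2 * ε.2)) :
    ε' = (0, 0) :=
  stmt14_general Feas J c1 c2 L hc a0 h0 hLip a' ε' hfeas hbox hopt
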